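/- In the reduction from Set Multicover, if I ⊆ [n] is a family of at most k sets such that every element i ∈ [m] belongs to at least b sets S_j with j ∈ I, then the constructed graph (element vertices v_i with capacity deg(v_i)−b and k'+1 pendant leaves, set vertices u_j with capacity deg(u_j), edges v_i u_j for i ∈ S_j) admits a capacitated vertex cover of size at most k' = m + k, namely X = {v_i : i ∈ [m]} ∪ {u_j : j ∈ I}. -/

import Mathlib

/-!
Assign every edge `v_i u_j` with `j ∈ I` to `u_j`, and every other edge to its element
vertex. Then `u_j` receives at most its degree, while `v_i` loses at least `b` of its
edges, namely those to the `u_j` with `j ∈ I` and `i ∈ S_j`, so it receives at most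
`deg(v_i) - b`.
-/

open Sum

/-- Vertices of the Set Multicover reduction graph: element vertices, set vertices,
and `k'+1` pendant leaves per element vertex. -/
abbrev SMCVert (m n k' : ℕ) := Fin m ⊕ Fin n ⊕ (Fin m × Fin (k' + 1))

/-- The reduction graph: edges `v_i u_j` whenever `i ∈ S_j`, and each element
vertex `v_i` adjacent to its `k'+1` private leaves. -/
def SMCGraph (m n k' : ℕ) (S : Fin n → Finset (Fin m)) :
    SimpleGraph (SMCVert m n k') :=
  SimpleGraph.fromRel (fun a b =>
    match a, b with
    | inl i, inr (inl j) => i ∈ S j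
    | inl i, inr (inr (i', _)) => i = i'
    | _, _ => False)

/-- Capacities: `c(v_i) = deg(v_i) − b`, `c(u_j) = deg(u_j)`, leaves have capacity 1. -/
noncomputable def SMCcap (m n k' b : ℕ) (S : Fin n → Finset (Fin m)) :
    SMCVert m n k' → ℕ
  | inl i => ((SMCGraph m n k' S).neighborSet (inl i)).ncard - b
  | inr (inl j) => ((SMCGraph m n k' S).neighborSet (inr (inl j))).ncard
  | inr (inr _) => 1

/-- Capacitated vertex cover: every edge is assigned to an endpoint lying in `X`,
and every vertex of `X` receives at most its capacity. -/
def IsCVC {V : Type*} (G : SimpleGraph V) (c : V → ℕ) (X : Set V)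
    (f : Sym2 V → V) : Prop :=
  (∀ e ∈ G.edgeSet, f e ∈ e ∧ f e ∈ X) ∧
  ∀ v ∈ X, {e ∈ G.edgeSet | f e = v}.ncard ≤ c v

namespace Sym2

variable {α β : Type*} [LinearOrder β]

noncomputable def argmax (r : α → β) (e : Sym2 α) : α :=
  if r e.out.1 ≤ r e.out.2 then e.out.2 else e.out.1

theorem argmax_spec (r : α → β) (e : Sym2 α) :
    argmax r e ∈ e ∧ ∀ y ∈ e, r y ≤ r (argmax r e) := by
  have he : s(e.out.1, e.out.2) = e := Quot.out_eq e
  unfold argmax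
  generalize e.out.1 = a, e.out.2 = b at he ⊢
  subst he
  split_ifs with h
  · exact ⟨mem_mk_right a b, by simp [h]⟩
  · exact ⟨mem_mk_left a b, by simp [(not_le.mp h).le]⟩

theorem argmax_mem (r : α → β) (e : Sym2 α) : argmax r e ∈ e :=
  (argmax_spec r e).1

theorem le_argmax (r : α → β) {e : Sym2 α} {y : α} (hy : y ∈ e) : r y ≤ r (argmax r e) :=
  (argmax_spec r e).2 y hy

theorem argmax_mk_of_lt (r : α → β) {a b : α} (h : r a < r b) : argmax r s(a, b) = b := by
  rcases mem_iff.mp (argmax_mem r s(a, b)) with ha | hb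
  · exact absurd (ha ▸ le_argmax r (mem_mk_right a b)) h.not_ge
  · exact hb

end Sym2

namespace SimpleGraph

theorem ncard_setOf_edge_assigned {V : Type*} (G : SimpleGraph V) {f : Sym2 V → V}
    (hf : ∀ e ∈ G.edgeSet, f e ∈ e) (v : V) :
    {e ∈ G.edgeSet | f e = v}.ncard = {w ∈ G.neighborSet v | f s(v, w) = v}.ncard := by
  have himage : {e ∈ G.edgeSet | f e = v} =
      (fun w => s(v, w)) '' {w ∈ G.neighborSet v | f s(v, w) = v} := by
    ext e
    constructor
    · rintro ⟨he, hfe⟩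
      obtain ⟨w, rfl⟩ := Sym2.mem_iff_exists.mp (hfe ▸ hf e he)
      exact ⟨w, ⟨he, hfe⟩, rfl⟩
    · rintro ⟨w, ⟨hw, hfw⟩, rfl⟩
      exact ⟨hw, hfw⟩
  rw [himage, Set.ncard_image_of_injective _ fun _ _ => Sym2.congr_right.mp]

end SimpleGraph

namespace SMCGraph

variable {m n k' : ℕ} {S : Fin n → Finset (Fin m)}

theorem adj_inl_inr_inl {i : Fin m} {j : Fin n} :
    (SMCGraph m n k' S).Adj (inl i) (inr (inl j)) ↔ i ∈ S j := by
  simp [SMCGraph]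

theorem exists_inl_of_adj {a b : SMCVert m n k'} (h : (SMCGraph m n k' S).Adj a b) :
    ∃ i, a = inl i ∨ b = inl i := by
  rw [SMCGraph, SimpleGraph.fromRel_adj] at h
  obtain ⟨-, h | h⟩ := h <;>
    rcases a with i | j | p <;> rcases b with i' | j' | q <;> simp_all

end SMCGraph

section Reduction

variable {m n k' : ℕ}

def smcCover (I : Finset (Fin n)) : Set (SMCVert m n k') :=
  {v | ∃ i : Fin m, v = inl i} ∪ {v | ∃ j ∈ I, v = inr (inl j)}

def smcPriority (I : Finset (Fin n)) : SMCVert m n k' → ℕ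
  | inl _ => 1
  | inr (inl j) => if j ∈ I then 2 else 0
  | inr (inr _) => 0

theorem one_le_smcPriority_iff {I : Finset (Fin n)} {v : SMCVert m n k'} :
    1 ≤ smcPriority I v ↔ v ∈ smcCover I := by
  rcases v with i | j | p
  · simp [smcPriority, smcCover]
  · by_cases hj : j ∈ I <;> simp [smcPriority, smcCover, hj]
  · simp [smcPriority, smcCover]

theorem ncard_smcCover_le (I : Finset (Fin n)) :
    (smcCover I : Set (SMCVert m n k')).ncard ≤ m + I.card := by
  have hinl : {v : SMCVert m n k' | ∃ i : Fin m, v = inl i} = Set.range inl := by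
    ext v; simp [eq_comm]
  have hI : {v : SMCVert m n k' | ∃ j ∈ I, v = inr (inl j)} =
      (inr ∘ inl) '' (I : Set (Fin n)) := by
    ext v; simp [eq_comm]
  calc (smcCover I : Set (SMCVert m n k')).ncard
      ≤ (Set.range (inl : Fin m → SMCVert m n k')).ncard
        + ((inr ∘ inl) '' (I : Set (Fin n)) : Set (SMCVert m n k')).ncard := by
        rw [smcCover, hinl, hI]; exact Set.ncard_union_le _ _
    _ ≤ m + I.card := by
        gcongr
        · simp [Set.ncard_range_of_injective inl_injective]
        · simpa using Set.ncard_image_le (f := (inr ∘ inl : Fin n → SMCVert m n k'))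
            (I : Set (Fin n)).toFinite

theorem isCVC_smcCover (b : ℕ) (S : Fin n → Finset (Fin m)) (I : Finset (Fin n))
    (hcov : ∀ i : Fin m, b ≤ (I.filter (fun j => i ∈ S j)).card) :
    IsCVC (SMCGraph m n k' S) (SMCcap m n k' b S) (smcCover I)
      (Sym2.argmax (smcPriority I)) := by
  set G := SMCGraph m n k' S
  have hf : ∀ e ∈ G.edgeSet, Sym2.argmax (smcPriority I) e ∈ e :=
    fun e _ => Sym2.argmax_mem _ e
  refine ⟨fun e he => ⟨hf e he, ?_⟩, ?_⟩
  · induction e using Sym2.ind with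
    | _ a b =>
      obtain ⟨i, hi⟩ := SMCGraph.exists_inl_of_adj (G.mem_edgeSet.mp he)
      refine one_le_smcPriority_iff.mp (le_trans ?_ (Sym2.le_argmax _ (y := inl i) ?_))
      · simp [smcPriority]
      · rcases hi with rfl | rfl <;> simp
  rintro _ (⟨i, rfl⟩ | ⟨j, -, rfl⟩) <;> rw [G.ncard_setOf_edge_assigned hf]
  · set A := {w ∈ G.neighborSet (inl i) | Sym2.argmax (smcPriority I) s(inl i, w) = inl i}
    set D : Set (SMCVert m n k') := (inr ∘ inl) '' ↑(I.filter fun j => i ∈ S j)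
    have hD : b ≤ D.ncard := by
      rw [Set.ncard_image_of_injective _ (inr_injective.comp inl_injective),
        Set.ncard_coe_finset]
      exact hcov i
    have hDN : D ⊆ G.neighborSet (inl i) := by
      rintro _ ⟨j, hj, rfl⟩
      exact SMCGraph.adj_inl_inr_inl.mpr (Finset.mem_filter.mp hj).2
    -- `u_j` with `j ∈ I` outranks `v_i`, so such an edge goes to `u_j`.
    have hAD : Disjoint A D := by
      rw [Set.disjoint_left]
      rintro _ ⟨-, hfw⟩ ⟨j, hj, rfl⟩
      dsimp only [Function.comp_apply] at hfw
      rw [Sym2.argmax_mk_of_lt _ (by simp [smcPriority, (Finset.mem_filter.mp hj).1])] at hfw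
      simp at hfw
    have hsum : A.ncard + D.ncard ≤ (G.neighborSet (inl i)).ncard := by
      rw [← Set.ncard_union_eq hAD]
      exact Set.ncard_le_ncard (Set.union_subset (fun _ hw => hw.1) hDN)
    change A.ncard ≤ (G.neighborSet (inl i)).ncard - b
    omega
  · exact Set.ncard_le_ncard (fun _ hw => hw.1)

end Reduction

/-- If `I` is a multicover of size at most `k`, then `X = {v_i} ∪ {u_j : j ∈ I}` is a
capacitated vertex cover of the reduction graph of size at most `k' = m + k`. -/
theorem stmt11 (m n b k : ℕ) (S : Fin n → Finset (Fin m))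
    (I : Finset (Fin n)) (hI : I.card ≤ k)
    (hcov : ∀ i : Fin m, b ≤ (I.filter (fun j => i ∈ S j)).card) :
    ∃ f : Sym2 (SMCVert m n (m + k)) → SMCVert m n (m + k),
      IsCVC (SMCGraph m n (m + k) S) (SMCcap m n (m + k) b S)
        ({v | ∃ i : Fin m, v = inl i} ∪ {v | ∃ j ∈ I, v = inr (inl j)}) f ∧
      ({v | ∃ i : Fin m, v = inl i} ∪
        {v | ∃ j ∈ I, v = inr (inl j)} : Set (SMCVert m n (m + k))).ncard ≤ m + k :=
  ⟨_, isCVC_smcCover b S I hcov, (ncard_smcCover_le I).trans (by omega)⟩
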